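/- arXiv:quant-ph/0404061 — 4 statements merged into one kernel-verified Lean document; each statement's English description precedes it below -/
import Mathlib

section
/- Let a be an element of order r in a group H, and let b = a^k. Define f : ZMod r × ZMod r → H by f(x₁, x₂) = a^{x₁} b^{x₂}. Then f(x₁,x₂) = f(y₁,y₂) if and only if (x₁ - y₁, x₂ - y₂) lies in the subgroup of ZMod r × ZMod r generated by (-k, 1). -/
theorem dlp_hidden_subgroup {H : Type*} [Group H] (a : H) (r : ℕ) (hr : 0 < r)
    (hord : orderOf a = r) (k : ℤ) (b : H) (hb : b = a ^ k)
    (x₁ x₂ y₁ y₂ : ZMod r) :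
    a ^ (x₁.val) * b ^ (x₂.val) = a ^ (y₁.val) * b ^ (y₂.val) ↔
      (x₁ - y₁, x₂ - y₂) ∈ AddSubgroup.zmultiples ((-(k : ZMod r), (1 : ZMod r))) := by
  haveI : NeZero r := ⟨hr.ne'⟩
  have hcast : ∀ z : ZMod r, ((z.val : ℤ) : ZMod r) = z := by
    intro z
    push_cast
    simp [ZMod.natCast_val, ZMod.cast_id]
  have hlhs : a ^ (x₁.val) * b ^ (x₂.val) = a ^ (y₁.val) * b ^ (y₂.val) ↔
      ((x₁.val : ℤ) + k * x₂.val : ZMod r) = ((y₁.val : ℤ) + k * y₂.val : ZMod r) := by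
    subst hb
    have key : ∀ m n : ℕ, a ^ m * (a ^ k) ^ n = a ^ ((m : ℤ) + k * n) := fun m n => by
      rw [zpow_add, zpow_natCast, zpow_mul, zpow_natCast]
    rw [key x₁.val x₂.val, key y₁.val y₂.val,
      zpow_eq_zpow_iff_modEq, hord, ← ZMod.intCast_eq_intCast_iff]
    push_cast
    tauto
  rw [hlhs]
  push_cast
  simp only [ZMod.natCast_val, ZMod.cast_id]
  constructor
  · intro h
    refine AddSubgroup.mem_zmultiples_iff.mpr ?_
    obtain ⟨n, hn⟩ := ZMod.intCast_surjective (x₂ - y₂)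
    refine ⟨n, ?_⟩
    have h2 : (n : ZMod r) • ((1 : ZMod r)) = x₂ - y₂ := by simpa using hn
    have h1 : x₁ - y₁ = -(k : ZMod r) * (x₂ - y₂) := by linear_combination h
    simp only [Prod.smul_mk, zsmul_eq_mul, Prod.mk.injEq, hn]
    exact ⟨by rw [h1]; ring, by ring⟩
  · intro h
    obtain ⟨n, hn⟩ := AddSubgroup.mem_zmultiples_iff.mp h
    rw [Prod.smul_mk, Prod.mk.injEq] at hn
    obtain ⟨h1, h2⟩ := hn
    simp only [zsmul_eq_mul] at h1 h2
    have h1' : x₁ - y₁ = -(k : ZMod r) * (n : ZMod r) := by rw [← h1]; ring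
    have h2' : x₂ - y₂ = (n : ZMod r) := by rw [← h2]; ring
    linear_combination h1' + (k : ZMod r) * h2'
end

section
/- Let n be odd and not a prime power, with n = ∏_{i=1}^k p_i^{e_i} for distinct odd primes p_i and k ≥ 2. Let a be coprime to n with multiplicative order r modulo n. If r is even and a^{r/2} ≢ -1 (mod n), then gcd(a^{r/2} - 1, n) is a nontrivial factor of n (i.e., 1 < gcd(a^{r/2}-1, n) < n). -/
theorem miller_factor_nontrivial (n : ℕ) (hn : 1 < n) (hodd : Odd n)
    (hnpp : ¬ IsPrimePow n) (a : ℕ) (ha : Nat.Coprime a n)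
    (r : ℕ) (hr : r = orderOf (ZMod.unitOfCoprime a ha))
    (hreven : 2 ∣ r)
    (hne : ((a : ZMod n)) ^ (r / 2) ≠ -1) :
    1 < Int.gcd ((a : ℤ) ^ (r / 2) - 1) (n : ℤ) ∧
      Int.gcd ((a : ℤ) ^ (r / 2) - 1) (n : ℤ) < n := by
  haveI : NeZero n := ⟨by omega⟩
  set u := ZMod.unitOfCoprime a ha with hu
  have hr0 : 0 < r := hr ▸ orderOf_pos u
  have hur : u ^ r = 1 := hr ▸ pow_orderOf_eq_one u
  have har : (a : ZMod n) ^ r = 1 := by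
    have := congrArg (Units.val) hur
    simpa [hu, ZMod.coe_unitOfCoprime] using this
  have hsq : ((a : ℤ) ^ (r / 2)) ^ 2 = (a : ℤ) ^ r := by
    rw [← pow_mul, Nat.div_mul_cancel hreven]
  have hdvdr : (n : ℤ) ∣ (a : ℤ) ^ r - 1 := by
    rw [← ZMod.intCast_zmod_eq_zero_iff_dvd]
    push_cast
    rw [har]; ring
  have hdvd : (n : ℤ) ∣ ((a : ℤ) ^ (r / 2) - 1) * ((a : ℤ) ^ (r / 2) + 1) := by
    have : ((a : ℤ) ^ (r / 2) - 1) * ((a : ℤ) ^ (r / 2) + 1)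
        = ((a : ℤ) ^ (r / 2)) ^ 2 - 1 := by ring
    rw [this, hsq]; exact hdvdr
  constructor
  · by_contra h
    push_neg at h
    have hg0 : 0 < Int.gcd ((a : ℤ) ^ (r / 2) - 1) (n : ℤ) :=
      Int.gcd_pos_of_ne_zero_right _ (by exact_mod_cast (by omega : n ≠ 0))
    have hg1 : Int.gcd ((a : ℤ) ^ (r / 2) - 1) (n : ℤ) = 1 := by omega
    have hcop : IsCoprime ((n : ℤ)) ((a : ℤ) ^ (r / 2) - 1) :=
      (Int.isCoprime_iff_gcd_eq_one.mpr hg1).symm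
    have hdvd2 : (n : ℤ) ∣ (a : ℤ) ^ (r / 2) + 1 :=
      hcop.dvd_of_dvd_mul_left hdvd
    apply hne
    have := (ZMod.intCast_zmod_eq_zero_iff_dvd _ n).mpr hdvd2
    push_cast at this
    linear_combination this
  · have hgdvd : (Int.gcd ((a : ℤ) ^ (r / 2) - 1) (n : ℤ) : ℤ) ∣ (n : ℤ) :=
      Int.gcd_dvd_right _ _
    have hgle : Int.gcd ((a : ℤ) ^ (r / 2) - 1) (n : ℤ) ≤ n := by
      exact_mod_cast Int.le_of_dvd (by exact_mod_cast Nat.lt_of_lt_of_le Nat.zero_lt_one hn.le) hgdvd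
    rcases lt_or_eq_of_le hgle with h | h
    · exact h
    · exfalso
      have hdvd1 : (n : ℤ) ∣ (a : ℤ) ^ (r / 2) - 1 := by
        have : (n : ℤ) ∣ (Int.gcd ((a : ℤ) ^ (r / 2) - 1) (n : ℤ) : ℤ) := by
          rw [h]
        exact this.trans (Int.gcd_dvd_left _ _)
      have h1 : (a : ZMod n) ^ (r / 2) = 1 := by
        have := (ZMod.intCast_zmod_eq_zero_iff_dvd _ n).mpr hdvd1
        push_cast at this
        linear_combination this
      have hu1 : u ^ (r / 2) = 1 := by
        ext
        simpa [hu, ZMod.coe_unitOfCoprime] using h1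
      have hdd : orderOf u ∣ r / 2 := orderOf_dvd_of_pow_eq_one hu1
      rw [← hr] at hdd
      have : r ∣ r / 2 := hdd
      have := Nat.le_of_dvd (by omega) this
      omega
end

section
/- Let n be odd with k ≥ 2 distinct prime factors. Choose a uniformly at random from (ℤ/nℤ)*. Then the probability that the order r of a is even and a^{r/2} ≢ -1 (mod n) is at least 1 - (1/2)^{k-1}. -/
set_option maxHeartbeats 1000000

open Finset

def myPiUnits {ι : Type*} {M : ι → Type*} [∀ i, Monoid (M i)] :
    (∀ i, M i)ˣ ≃* ∀ i, (M i)ˣ where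
  toFun u i := ⟨u.val i, u.inv i, congrFun u.val_inv i, congrFun u.inv_val i⟩
  invFun f := ⟨fun i => (f i).val, fun i => (f i).inv,
    funext fun i => (f i).val_inv, funext fun i => (f i).inv_val⟩
  left_inv u := by ext i; rfl
  right_inv f := by ext i; rfl
  map_mul' u v := by ext i; rfl

@[simp] lemma myPiUnits_val {ι : Type*} {M : ι → Type*} [∀ i, Monoid (M i)]
    (u : (∀ i, M i)ˣ) (i : ι) : ((myPiUnits u i : M i)) = (u : ∀ i, M i) i := rfl

lemma cyc_card_pow_eq_one {C : Type*} [Group C] [Fintype C] [IsCyclic C] [DecidableEq C]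
    {d : ℕ} (hd : d ∣ Fintype.card C) (hd0 : 0 < d) :
    (univ.filter fun y : C => y ^ d = 1).card = d := by
  obtain ⟨g, hg⟩ := IsCyclic.exists_generator (α := C)
  have hog : orderOf g = Fintype.card C := by
    rw [orderOf_eq_card_of_forall_mem_zpowers hg, Nat.card_eq_fintype_card]
  have hN0 : 0 < Fintype.card C := Fintype.card_pos
  set x := g ^ (Fintype.card C / d) with hx
  have hox : orderOf x = d := by
    rw [hx, orderOf_pow, hog, Nat.gcd_eq_right (Nat.div_dvd_of_dvd hd),
      Nat.div_div_self hd hN0.ne']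
  refine le_antisymm (IsCyclic.card_pow_eq_one_le hd0) ?_
  classical
  have hsub : (Subgroup.zpowers x : Subgroup C).carrier.toFinset ⊆
      univ.filter fun y : C => y ^ d = 1 := by
    intro y hy
    rw [Set.mem_toFinset] at hy
    obtain ⟨k, rfl⟩ := hy
    simp only [mem_filter, mem_univ, true_and]
    rw [← zpow_natCast, ← zpow_mul, mul_comm, zpow_mul, zpow_natCast, ← hox,
      pow_orderOf_eq_one, one_zpow]
  have h2 := Finset.card_le_card hsub
  have h3 : (Subgroup.zpowers x : Subgroup C).carrier.toFinset.card = d := by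
    rw [Set.toFinset_card]
    have : Fintype.card (Subgroup.zpowers x).carrier = Nat.card (Subgroup.zpowers x) := by
      rw [Nat.card_eq_fintype_card]; rfl
    rw [this, Nat.card_zpowers, hox]
  omega


lemma cyclic_val_filter_bound {C : Type*} [Group C] [Fintype C] [IsCyclic C] [DecidableEq C]
    (h2N : 2 ∣ Fintype.card C) (t : ℕ) :
    2 * (univ.filter fun y : C => (orderOf y).factorization 2 = t).card ≤ Fintype.card C := by
  set N := Fintype.card C with hN
  have hN0 : 0 < N := Fintype.card_pos
  set s := N.factorization 2 with hs
  set m := N / 2 ^ s with hm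
  have hNsm : 2 ^ s * m = N := Nat.ordProj_mul_ordCompl_eq_self N 2
  have hm0 : 0 < m := Nat.ordCompl_pos 2 hN0.ne'
  have hm2 : ¬ 2 ∣ m := Nat.not_dvd_ordCompl Nat.prime_two hN0.ne'
  have hs1 : 1 ≤ s := (Nat.Prime.factorization_pos_of_dvd Nat.prime_two hN0.ne' h2N)
  -- the cumulative sets
  have hcum : ∀ u : ℕ, (univ.filter fun y : C => (orderOf y).factorization 2 ≤ u)
      = (univ.filter fun y : C => y ^ (2 ^ (min u s) * m) = 1) := by
    intro u
    ext y
    have ho0 : orderOf y ≠ 0 := (orderOf_pos y).ne'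
    have hoN : orderOf y ∣ N := orderOf_dvd_card
    have hD0 : 2 ^ (min u s) * m ≠ 0 := by positivity
    simp only [mem_filter, mem_univ, true_and]
    constructor
    · intro h
      rw [← orderOf_dvd_iff_pow_eq_one, ← Nat.factorization_le_iff_dvd ho0 hD0]
      intro p
      rcases eq_or_ne p 2 with rfl | hp
      · have h1 : (orderOf y).factorization 2 ≤ s := by
          have := (Nat.factorization_le_iff_dvd ho0 hN0.ne').mpr hoN
          exact this 2
        rw [Nat.factorization_mul (by positivity) hm0.ne', Nat.prime_two.factorization_pow]
        simp only [Finsupp.coe_add, Pi.add_apply, Finsupp.single_eq_same]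
        have : m.factorization 2 = 0 := Nat.factorization_eq_zero_of_not_dvd hm2
        omega
      · have h1 : (orderOf y).factorization p ≤ N.factorization p :=
          (Nat.factorization_le_iff_dvd ho0 hN0.ne').mpr hoN p
        have h2 : N.factorization p = (2 ^ (min u s) * m).factorization p := by
          conv_lhs => rw [← hNsm]
          rw [Nat.factorization_mul (by positivity) hm0.ne',
            Nat.factorization_mul (by positivity) hm0.ne',
            Nat.prime_two.factorization_pow, Nat.prime_two.factorization_pow]
          simp [Finsupp.single_eq_of_ne' (Ne.symm hp)]
        omega
    · intro h
      have hdvd : orderOf y ∣ 2 ^ (min u s) * m := orderOf_dvd_of_pow_eq_one h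
      have := (Nat.factorization_le_iff_dvd ho0 hD0).mpr hdvd 2
      rw [Nat.factorization_mul (by positivity) hm0.ne', Nat.prime_two.factorization_pow] at this
      simp only [Finsupp.coe_add, Pi.add_apply, Finsupp.single_eq_same] at this
      have hm2' : m.factorization 2 = 0 := Nat.factorization_eq_zero_of_not_dvd hm2
      omega
  have hcard : ∀ u : ℕ, (univ.filter fun y : C => (orderOf y).factorization 2 ≤ u).card
      = 2 ^ (min u s) * m := by
    intro u
    rw [hcum u]
    refine cyc_card_pow_eq_one ?_ (by positivity)
    rw [← hN, ← hNsm]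
    exact Nat.mul_dvd_mul (pow_dvd_pow 2 (min_le_right u s)) dvd_rfl
  rcases Nat.eq_zero_or_pos t with rfl | ht
  · have : (univ.filter fun y : C => (orderOf y).factorization 2 = 0)
        = (univ.filter fun y : C => (orderOf y).factorization 2 ≤ 0) := by
      apply filter_congr; intro y _; simp [Nat.le_zero]
    rw [this, hcard 0]
    simp only [Nat.zero_min, pow_zero, one_mul]
    calc 2 * m = 2 ^ 1 * m := by ring
    _ ≤ 2 ^ s * m := Nat.mul_le_mul_right m (Nat.pow_le_pow_right (by norm_num) hs1)
    _ = N := hNsm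
  · obtain ⟨t', rfl⟩ : ∃ t', t = t' + 1 := ⟨t - 1, by omega⟩
    have hsplit : (univ.filter fun y : C => (orderOf y).factorization 2 = t' + 1)
        = (univ.filter fun y : C => (orderOf y).factorization 2 ≤ t' + 1) \
          (univ.filter fun y : C => (orderOf y).factorization 2 ≤ t') := by
      ext y; simp only [mem_filter, mem_sdiff, mem_univ, true_and, not_le]; omega
    have hsub : (univ.filter fun y : C => (orderOf y).factorization 2 ≤ t')
        ⊆ (univ.filter fun y : C => (orderOf y).factorization 2 ≤ t' + 1) := by
      intro y hy
      simp only [mem_filter, mem_univ, true_and] at hy ⊢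
      omega
    rw [hsplit, card_sdiff_of_subset hsub, hcard, hcard]
    rcases le_or_gt (t' + 1) s with hts | hts
    · rw [min_eq_left hts, min_eq_left (by omega)]
      have : 2 ^ (t' + 1) * m - 2 ^ t' * m = 2 ^ t' * m := by
        rw [pow_succ]; ring_nf; omega
      rw [this]
      calc 2 * (2 ^ t' * m) = 2 ^ (t' + 1) * m := by ring
      _ ≤ 2 ^ s * m := Nat.mul_le_mul_right m (Nat.pow_le_pow_right (by norm_num) hts)
      _ = N := hNsm
    · rw [min_eq_right (by omega), min_eq_right (by omega)]
      omega

lemma fiber_count {G C : Type*} [Group G] [Group C] [Fintype G] [Fintype C] [DecidableEq C]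
    (π : G →* C) (hsurj : Function.Surjective π) (P : C → Prop) [DecidablePred P] :
    (univ.filter fun x : G => P (π x)).card = Nat.card π.ker * (univ.filter P).card := by
  classical
  have hfib : ∀ y : C, (univ.filter fun x : G => π x = y).card = Nat.card π.ker := by
    intro y
    obtain ⟨x₀, hx₀⟩ := hsurj y
    have : Nat.card π.ker = (univ.filter fun x : G => π x = 1).card := by
      rw [Nat.card_eq_fintype_card, ← Fintype.card_subtype]
      apply Fintype.card_congr
      exact Equiv.subtypeEquivRight (fun x => by simp [MonoidHom.mem_ker])
    rw [this]
    apply Finset.card_bij (fun x _ => x₀⁻¹ * x)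
    · intro a ha
      simp only [mem_filter, mem_univ, true_and] at ha ⊢
      rw [map_mul, map_inv, ha, hx₀, inv_mul_cancel]
    · intro a ha b hb hab
      exact mul_left_cancel hab
    · intro b hb
      simp only [mem_filter, mem_univ, true_and] at hb
      exact ⟨x₀ * b, by simp [map_mul, hx₀, hb], by group⟩
  rw [Finset.card_eq_sum_card_fiberwise (f := π) (t := univ.filter P)
    (fun x hx => by simpa using hx)]
  rw [Finset.sum_congr rfl (fun y hy => ?_), Finset.sum_const, smul_eq_mul, mul_comm]
  have : (univ.filter fun x : G => P (π x)).filter (fun x => π x = y)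
      = univ.filter fun x : G => π x = y := by
    ext x
    simp only [mem_filter, mem_univ, true_and]
    constructor
    · tauto
    · intro h; refine ⟨?_, h⟩; rw [h]; simpa using (mem_filter.mp hy).2
  rw [this, hfib y]



lemma component_bound {p e : ℕ} (hp : p.Prime) (hodd : p ≠ 2) (he : e ≠ 0) [NeZero (p ^ e)] (t : ℕ) :
    2 * (univ.filter fun x : (ZMod (p ^ e))ˣ =>
        (orderOf x).factorization 2 = t).card ≤ Fintype.card (ZMod (p ^ e))ˣ := by
  classical
  haveI : Fact p.Prime := ⟨hp⟩
  haveI : NeZero p := ⟨hp.pos.ne'⟩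
  have hdvd : p ∣ p ^ e := dvd_pow_self p he
  set π := ZMod.unitsMap hdvd with hπ
  have hsurj : Function.Surjective π := ZMod.unitsMap_surjective hdvd
  -- cardinalities
  have hcardC : Fintype.card (ZMod p)ˣ = p - 1 := ZMod.card_units p
  have hcardG : Fintype.card (ZMod (p ^ e))ˣ = p ^ (e - 1) * (p - 1) := by
    rw [ZMod.card_units_eq_totient, Nat.totient_prime_pow hp (Nat.pos_of_ne_zero he)]
  have hquot : Nat.card (ZMod (p ^ e))ˣ = Nat.card ((ZMod (p ^ e))ˣ ⧸ π.ker) * Nat.card π.ker :=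
    Subgroup.card_eq_card_quotient_mul_card_subgroup π.ker
  have hquotC : Nat.card ((ZMod (p ^ e))ˣ ⧸ π.ker) = Nat.card (ZMod p)ˣ :=
    Nat.card_congr (QuotientGroup.quotientKerEquivOfSurjective π hsurj).toEquiv
  have hGK : Fintype.card (ZMod (p ^ e))ˣ = Fintype.card (ZMod p)ˣ * Nat.card π.ker := by
    rw [← Nat.card_eq_fintype_card, hquot, hquotC, Nat.card_eq_fintype_card]
  have hK : Nat.card π.ker = p ^ (e - 1) := by
    have h1 : p - 1 ≠ 0 := by have := hp.two_le; omega
    have h3 := hGK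
    rw [hcardG, hcardC] at h3
    have h2 : (p - 1) * Nat.card π.ker = (p - 1) * p ^ (e - 1) := by rw [← h3]; ring
    have := hp.two_le
    exact Nat.eq_of_mul_eq_mul_left (by omega) h2
  have hKodd : ¬ 2 ∣ Nat.card π.ker := by
    rw [hK]
    intro h
    have h2p := (Nat.Prime.dvd_of_dvd_pow (p := 2) Nat.prime_two h)
    exact hodd ((Nat.prime_dvd_prime_iff_eq Nat.prime_two hp).mp h2p).symm
  have hK0 : Nat.card π.ker ≠ 0 := by rw [hK]; exact pow_ne_zero _ hp.pos.ne'
  -- valuation transfer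
  have hval : ∀ x : (ZMod (p ^ e))ˣ,
      (orderOf x).factorization 2 = (orderOf (π x)).factorization 2 := by
    intro x
    have hx0 : orderOf x ≠ 0 := (orderOf_pos x).ne'
    have hπx0 : orderOf (π x) ≠ 0 := (orderOf_pos (π x)).ne'
    have h1 : orderOf (π x) ∣ orderOf x := orderOf_map_dvd π x
    have hge : (orderOf (π x)).factorization 2 ≤ (orderOf x).factorization 2 :=
      (Nat.factorization_le_iff_dvd hπx0 hx0).mpr h1 2
    have hkermem : x ^ orderOf (π x) ∈ π.ker := by
      rw [MonoidHom.mem_ker, map_pow, pow_orderOf_eq_one]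
    have hpowker : (x ^ orderOf (π x)) ^ Nat.card π.ker = 1 := by
      have := pow_card_eq_one' (G := π.ker) (x := ⟨x ^ orderOf (π x), hkermem⟩)
      have h2 := congrArg (Subgroup.subtype π.ker) this
      simpa using h2
    have hdvd2 : orderOf x ∣ orderOf (π x) * Nat.card π.ker := by
      apply orderOf_dvd_of_pow_eq_one
      rw [pow_mul]; exact hpowker
    have hle : (orderOf x).factorization 2 ≤ (orderOf (π x)).factorization 2 := by
      have := (Nat.factorization_le_iff_dvd hx0 (by positivity)).mpr hdvd2 2
      rwa [Nat.factorization_mul hπx0 hK0, Finsupp.coe_add, Pi.add_apply,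
        Nat.factorization_eq_zero_of_not_dvd hKodd, add_zero] at this
    omega
  have hfilter : (univ.filter fun x : (ZMod (p ^ e))ˣ => (orderOf x).factorization 2 = t)
      = univ.filter fun x : (ZMod (p ^ e))ˣ => (orderOf (π x)).factorization 2 = t := by
    apply filter_congr; intro x _; rw [hval x]
  have h2C : 2 ∣ Fintype.card (ZMod p)ˣ := by
    rw [hcardC]
    have := hp.two_le
    have : p % 2 = 1 := Nat.odd_iff.mp (hp.odd_of_ne_two hodd)
    omega
  calc 2 * (univ.filter fun x : (ZMod (p ^ e))ˣ => (orderOf x).factorization 2 = t).card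
      = 2 * (Nat.card π.ker *
        (univ.filter fun y : (ZMod p)ˣ => (orderOf y).factorization 2 = t).card) := by
        rw [hfilter]
        exact congrArg (2 * ·) (fiber_count π hsurj fun y => (orderOf y).factorization 2 = t)
    _ = Nat.card π.ker *
        (2 * (univ.filter fun y : (ZMod p)ˣ => (orderOf y).factorization 2 = t).card) := by ring
    _ ≤ Nat.card π.ker * Fintype.card (ZMod p)ˣ :=
        Nat.mul_le_mul_left _ (cyclic_val_filter_bound h2C t)
    _ = Fintype.card (ZMod (p ^ e))ˣ := by rw [hGK]; ring

lemma dvd_half_of_val_lt {a r : ℕ} (ha : a ∣ r) (h2 : 2 ∣ r) (hr : r ≠ 0)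
    (hv : a.factorization 2 < r.factorization 2) : a ∣ r / 2 := by
  have ha0 : a ≠ 0 := by rintro rfl; exact hr (zero_dvd_iff.mp ha)
  have hr2 : r / 2 ≠ 0 := by
    obtain ⟨c, rfl⟩ := h2
    simpa using fun h => hr (by omega)
  rw [← Nat.factorization_le_iff_dvd ha0 hr2]
  intro q
  have hfle := (Nat.factorization_le_iff_dvd ha0 hr).mpr ha q
  rw [Nat.factorization_div h2, Nat.Prime.factorization Nat.prime_two]
  simp only [Finsupp.coe_tsub, Pi.sub_apply]
  rcases eq_or_ne q 2 with rfl | hq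
  · simp only [Finsupp.single_eq_same]; omega
  · rw [Finsupp.single_eq_of_ne' (Ne.symm hq)]; omega



open Finset in
theorem miller_good_a_probability (n : ℕ) [NeZero n] (hn : 1 < n) (hodd : Odd n)
    (k : ℕ) (hk : k = n.primeFactors.card) (hk2 : 2 ≤ k) :
    (1 - (1 / 2 : ℝ) ^ (k - 1)) * (Fintype.card (ZMod n)ˣ : ℝ) ≤
      ((Finset.univ.filter (fun a : (ZMod n)ˣ =>
          2 ∣ orderOf a ∧ ((a : ZMod n)) ^ (orderOf a / 2) ≠ -1)).card : ℝ) := by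
  classical
  have hn0 : n ≠ 0 := NeZero.ne n
  set N := Fintype.card (ZMod n)ˣ with hNdef
  set pred := fun a : (ZMod n)ˣ =>
      2 ∣ orderOf a ∧ ((a : ZMod n)) ^ (orderOf a / 2) ≠ -1 with hpred
  -- ### The main counting claim
  have key : (univ.filter fun a => ¬ pred a).card * 2 ^ (k - 1) ≤ N := by
    -- index type
    haveI hne : Nonempty {p // p ∈ n.primeFactors} := by
      have hP : n.primeFactors.Nonempty := by
        rw [← Finset.card_pos, ← hk]; omega
      exact hP.to_subtype
    set q : {p // p ∈ n.primeFactors} → ℕ := fun i => (i : ℕ) ^ n.factorization i with hqdef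
    have hqfacts : ∀ i : {p // p ∈ n.primeFactors},
        (i : ℕ).Prime ∧ n.factorization i ≠ 0 ∧ 2 < q i ∧ (i : ℕ) ≠ 2 := by
      intro i
      have hp : (i : ℕ).Prime := Nat.prime_of_mem_primeFactors i.2
      have hdvd : (i : ℕ) ∣ n := Nat.dvd_of_mem_primeFactors i.2
      have hne2 : (i : ℕ) ≠ 2 := by
        rintro h
        rw [Nat.odd_iff] at hodd
        rw [h] at hdvd
        omega
      refine ⟨hp, (Nat.Prime.factorization_pos_of_dvd hp hn0 hdvd).ne', ?_, hne2⟩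
      have h3 : 3 ≤ (i : ℕ) := by have := hp.two_le; omega
      have h4 : (i : ℕ) ≤ q i :=
        Nat.le_self_pow (Nat.Prime.factorization_pos_of_dvd hp hn0 hdvd).ne' _
      omega
    haveI hqz : ∀ i, NeZero (q i) := fun i => ⟨by
      have := (hqfacts i).2.2.1; omega⟩
    -- CRT isomorphism
    have hprod : ∏ i : {p // p ∈ n.primeFactors}, q i = n := by
      have h1 := Nat.factorization_prod_pow_eq_self hn0
      rw [Finsupp.prod, Nat.support_factorization] at h1
      rw [hqdef, Finset.prod_coe_sort n.primeFactors (fun p => p ^ n.factorization p)]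
      exact h1
    have hcop : Pairwise (Function.onFun Nat.Coprime q) := by
      intro i j hij
      have hi := (hqfacts i).1
      have hj := (hqfacts j).1
      have hij' : (i : ℕ) ≠ j := fun h => hij (Subtype.ext h)
      show Nat.Coprime (q i) (q j)
      exact Nat.Coprime.pow _ _ ((Nat.coprime_primes hi hj).mpr hij')
    set σ : ZMod n ≃+* ∀ i, ZMod (q i) :=
      (ZMod.ringEquivCongr hprod.symm).trans (ZMod.prodEquivPi q hcop) with hσ
    set E : (ZMod n)ˣ ≃* ∀ i, (ZMod (q i))ˣ :=
      (Units.mapEquiv σ.toMulEquiv).trans myPiUnits with hE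
    have hEval : ∀ (u : (ZMod n)ˣ) (i), ((E u i : ZMod (q i))) = σ (u : ZMod n) i :=
      fun u i => rfl
    have hEneg : ∀ i, E (-1) i = -1 := by
      intro i
      apply Units.ext
      rw [hEval]
      have h1 : ((-1 : (ZMod n)ˣ) : ZMod n) = -1 := by simp
      rw [h1, map_neg, map_one]
      simp
    -- the valuation claim
    have claim1 : ∀ a : (ZMod n)ˣ, ¬ pred a →
        ∀ i, (orderOf (E a i)).factorization 2 = (orderOf a).factorization 2 := by
      intro a hbad i
      have hr0 : orderOf a ≠ 0 := (orderOf_pos a).ne'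
      have hi0 : orderOf (E a i) ≠ 0 := (orderOf_pos (E a i)).ne'
      have hdvd : orderOf (E a i) ∣ orderOf a := by
        apply orderOf_dvd_of_pow_eq_one
        have h1 : E a ^ orderOf a = 1 := by rw [← map_pow, pow_orderOf_eq_one, map_one]
        calc (E a i) ^ orderOf a = (E a ^ orderOf a) i := rfl
          _ = 1 := by rw [h1]; rfl
      have hbad' : 2 ∣ orderOf a → ((a : ZMod n)) ^ (orderOf a / 2) = -1 := by
        intro h2
        by_contra hneq
        exact hbad ⟨h2, hneq⟩
      by_cases h2 : 2 ∣ orderOf a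
      · have hm := hbad' h2
        have hU : a ^ (orderOf a / 2) = (-1 : (ZMod n)ˣ) := by
          apply Units.ext
          rw [Units.val_pow_eq_pow_val, hm]
          simp
        have hcomp : (E a i) ^ (orderOf a / 2) = (-1 : (ZMod (q i))ˣ) := by
          have h3 : E (a ^ (orderOf a / 2)) i = E (-1) i := by rw [hU]
          rw [map_pow] at h3
          rw [← hEneg i, ← h3]
          rfl
        have hneg1 : ((-1 : (ZMod (q i))ˣ)) ≠ 1 := by
          intro h
          haveI : Fact (2 < q i) := ⟨(hqfacts i).2.2.1⟩
          have h4 : (-1 : ZMod (q i)) = 1 := by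
            have := congrArg Units.val h
            simpa using this
          exact ZMod.neg_one_ne_one h4
        refine le_antisymm ((Nat.factorization_le_iff_dvd hi0 hr0).mpr hdvd 2) ?_
        by_contra hlt
        push_neg at hlt
        have h5 := dvd_half_of_val_lt hdvd h2 hr0 hlt
        have h6 : (E a i) ^ (orderOf a / 2) = 1 := orderOf_dvd_iff_pow_eq_one.mp h5
        rw [hcomp] at h6
        exact hneg1 h6
      · have hv2r : (orderOf a).factorization 2 = 0 :=
          Nat.factorization_eq_zero_of_not_dvd h2
        rw [hv2r]
        exact Nat.factorization_eq_zero_of_not_dvd (fun h => h2 (h.trans hdvd))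
    -- counting
    set c : {p // p ∈ n.primeFactors} → ℕ → ℕ := fun i t =>
      (univ.filter fun x : (ZMod (q i))ˣ => (orderOf x).factorization 2 = t).card with hc
    have hcard_congr : N = ∏ i, Fintype.card (ZMod (q i))ˣ := by
      rw [hNdef, Fintype.card_congr E.toEquiv, Fintype.card_pi]
    have hmaps : ∀ a ∈ univ.filter (fun a => ¬ pred a),
        E a ∈ (range (N + 1)).biUnion (fun t => univ.filter
          (fun b : ∀ i, (ZMod (q i))ˣ => ∀ i, (orderOf (b i)).factorization 2 = t)) := by
      intro a ha
      rw [mem_biUnion]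
      refine ⟨(orderOf a).factorization 2, ?_, ?_⟩
      · rw [mem_range]
        have h1 : orderOf a ∣ N := orderOf_dvd_card
        have h2 : (orderOf a).factorization 2 < orderOf a :=
          Nat.factorization_lt 2 (orderOf_pos a).ne'
        have h3 : orderOf a ≤ N := Nat.le_of_dvd Fintype.card_pos h1
        omega
      · rw [mem_filter]
        exact ⟨mem_univ _, claim1 a (mem_filter.mp ha).2⟩
    have hinj : (univ.filter fun a => ¬ pred a).card ≤
        ((range (N + 1)).biUnion (fun t => univ.filter
          (fun b : ∀ i, (ZMod (q i))ˣ => ∀ i, (orderOf (b i)).factorization 2 = t))).card :=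
      Finset.card_le_card_of_injOn E hmaps (fun a _ b _ h => E.injective h)
    have hBt : ∀ t, (univ.filter
        (fun b : ∀ i, (ZMod (q i))ˣ => ∀ i, (orderOf (b i)).factorization 2 = t)).card
        = ∏ i, c i t := by
      intro t
      rw [← Fintype.card_subtype, Fintype.card_congr (Equiv.subtypePiEquivPi
        (p := fun i (x : (ZMod (q i))ˣ) => (orderOf x).factorization 2 = t)), Fintype.card_pi]
      exact Finset.prod_congr rfl fun i _ => Fintype.card_subtype _
    obtain ⟨i₀⟩ := hne
    have hkcard : Fintype.card {p // p ∈ n.primeFactors} = k := by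
      rw [Fintype.card_coe, hk]
    have hk1 : (univ.erase i₀).card = k - 1 := by
      rw [Finset.card_erase_of_mem (mem_univ i₀), Finset.card_univ, hkcard]
    have hcomp : ∀ (i : {p // p ∈ n.primeFactors}) t,
        2 * c i t ≤ Fintype.card (ZMod (q i))ˣ := by
      intro i t
      exact component_bound (hqfacts i).1 (hqfacts i).2.2.2 (hqfacts i).2.1 t
    have hdisj : ∀ t₁ ∈ range (N + 1), ∀ t₂ ∈ range (N + 1), t₁ ≠ t₂ →
        Disjoint (univ.filter fun x : (ZMod (q i₀))ˣ => (orderOf x).factorization 2 = t₁)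
          (univ.filter fun x : (ZMod (q i₀))ˣ => (orderOf x).factorization 2 = t₂) := by
      intro t₁ _ t₂ _ hne'
      rw [Finset.disjoint_left]
      intro x hx1 hx2
      rw [mem_filter] at hx1 hx2
      exact hne' (hx1.2.symm.trans hx2.2)
    have hsum_i0 : ∑ t ∈ range (N + 1), c i₀ t ≤ Fintype.card (ZMod (q i₀))ˣ := by
      rw [hc, ← Finset.card_biUnion hdisj, ← Finset.card_univ]
      exact Finset.card_le_univ _
    calc (univ.filter fun a => ¬ pred a).card * 2 ^ (k - 1)
        ≤ (∑ t ∈ range (N + 1), ∏ i, c i t) * 2 ^ (k - 1) := by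
          apply Nat.mul_le_mul_right
          refine hinj.trans ?_
          refine (Finset.card_biUnion_le).trans ?_
          exact le_of_eq (Finset.sum_congr rfl fun t _ => hBt t)
      _ = ∑ t ∈ range (N + 1), c i₀ t * ∏ i ∈ univ.erase i₀, (2 * c i t) := by
          rw [Finset.sum_mul]
          refine Finset.sum_congr rfl fun t _ => ?_
          rw [← Finset.mul_prod_erase univ (fun i => c i t) (mem_univ i₀),
            Finset.prod_mul_distrib, Finset.prod_const, hk1]
          ring
      _ ≤ ∑ t ∈ range (N + 1), c i₀ t * ∏ i ∈ univ.erase i₀, Fintype.card (ZMod (q i))ˣ := by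
          refine Finset.sum_le_sum fun t _ => ?_
          refine Nat.mul_le_mul_left _ ?_
          exact Finset.prod_le_prod' fun i _ => hcomp i t
      _ = (∑ t ∈ range (N + 1), c i₀ t) * ∏ i ∈ univ.erase i₀, Fintype.card (ZMod (q i))ˣ := by
          rw [Finset.sum_mul]
      _ ≤ Fintype.card (ZMod (q i₀))ˣ * ∏ i ∈ univ.erase i₀, Fintype.card (ZMod (q i))ˣ :=
          Nat.mul_le_mul_right _ hsum_i0
      _ = ∏ i, Fintype.card (ZMod (q i))ˣ :=
          Finset.mul_prod_erase univ (fun i => Fintype.card (ZMod (q i))ˣ) (mem_univ i₀)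
      _ = N := hcard_congr.symm
  -- ### Real-number algebra
  have hsplit : (univ.filter pred).card + (univ.filter fun a => ¬ pred a).card = N := by
    rw [hNdef, ← Finset.card_univ]
    exact Finset.card_filter_add_card_filter_not pred
  have h2p : (0 : ℝ) < 2 ^ (k - 1) := by positivity
  have hBR : ((univ.filter fun a => ¬ pred a).card : ℝ) * 2 ^ (k - 1) ≤ N := by
    exact_mod_cast key
  have hGB : ((univ.filter pred).card : ℝ) + (univ.filter fun a => ¬ pred a).card = N := by
    exact_mod_cast hsplit
  have hB : ((univ.filter fun a => ¬ pred a).card : ℝ) ≤ N * ((2:ℝ) ^ (k-1))⁻¹ := by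
    rw [← div_eq_mul_inv, le_div_iff₀ h2p]; exact hBR
  have hfe : (Finset.univ.filter (fun a : (ZMod n)ˣ =>
      2 ∣ orderOf a ∧ ((a : ZMod n)) ^ (orderOf a / 2) ≠ -1)) = univ.filter pred :=
    Finset.filter_congr (fun x _ => by rw [hpred])
  rw [hfe, one_div, inv_pow, sub_mul, one_mul]
  have hNN : (0:ℝ) ≤ (N:ℝ) := Nat.cast_nonneg N
  nlinarith [hGB, hB]
end

section
/- Two uniformly random integers from {1, …, r} are coprime with probability at least 1/2: for r ≥ 1, the number of pairs (k₁, k₂) ∈ {1,…,r}² with gcd(k₁, k₂) = 1 is at least r²/2. -/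
open Finset

lemma telescope_sum (n : ℕ) :
    ∑ k ∈ range n, ((1:ℝ)/(k+1) - 1/(k+2)) = 1 - 1/(n+1) := by
  have h := Finset.sum_range_sub' (f := fun k : ℕ => (1:ℝ)/(k+1)) n
  have e : ∀ k : ℕ, (1:ℝ)/(k+1) - 1/(k+2) = (1:ℝ)/(k+1) - 1/((k+1:ℕ)+1) := by
    intro k; push_cast; ring_nf
  rw [Finset.sum_congr rfl (fun k _ => e k), h]
  norm_num

lemma primes_sum_le (r : ℕ) :
    ∑ p ∈ (range (r+1)).filter Nat.Prime, (1:ℝ)/(p:ℝ)^2 ≤ 1/2 := by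
  have hsub : (range (r+1)).filter Nat.Prime ⊆
      insert 2 ((range r).image (fun k => 2*k+3)) := by
    intro p hp
    simp only [mem_filter, mem_range] at hp
    obtain ⟨hpr, hp⟩ := hp
    by_cases h2 : p = 2
    · simp [h2]
    · have hodd : Odd p := hp.odd_of_ne_two h2
      have h3 : 3 ≤ p := by
        rcases hodd with ⟨m, hm⟩
        have := hp.two_le
        omega
      refine mem_insert_of_mem ?_
      simp only [mem_image, mem_range]
      exact ⟨(p-3)/2, by omega, by rcases hodd with ⟨m, hm⟩; omega⟩
  have hnn : ∀ p ∈ (insert 2 ((range r).image (fun k => 2*k+3)) : Finset ℕ),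
      (0:ℝ) ≤ 1/(p:ℝ)^2 := by intro p _; positivity
  calc ∑ p ∈ (range (r+1)).filter Nat.Prime, (1:ℝ)/(p:ℝ)^2
      ≤ ∑ p ∈ (insert 2 ((range r).image (fun k => 2*k+3)) : Finset ℕ), (1:ℝ)/(p:ℝ)^2 := by
        exact Finset.sum_le_sum_of_subset_of_nonneg hsub (fun p hp _ => hnn p hp)
    _ ≤ 1/4 + ∑ k ∈ range r, (1:ℝ)/(2*(k:ℝ)+3)^2 := by
        have h2notmem : (2:ℕ) ∉ (range r).image (fun k => 2*k+3) := by
          simp only [mem_image, mem_range]; rintro ⟨k, _, hk⟩; omega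
        rw [Finset.sum_insert h2notmem,
          Finset.sum_image (by intro a _ b _ h; simp only at h; omega)]
        push_cast
        norm_num
    _ ≤ 1/4 + ∑ k ∈ range r, (1/4) * ((1:ℝ)/(k+1) - 1/(k+2)) := by
        gcongr with k hk
        have key : (1:ℝ)/(k+1) - 1/(k+2) = 1/(((k:ℝ)+1)*((k:ℝ)+2)) := by
          have hk1 : ((k:ℝ)+1) ≠ 0 := by positivity
          have hk2 : ((k:ℝ)+2) ≠ 0 := by positivity
          field_simp
          ring
        have key2 : (1:ℝ)/4 * (1/(((k:ℝ)+1)*((k:ℝ)+2))) = 1/(4*(((k:ℝ)+1)*((k:ℝ)+2))) := by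
          rw [div_mul_div_comm]; norm_num
        rw [key, key2, div_le_div_iff₀ (by positivity) (by positivity)]
        nlinarith [sq_nonneg ((k:ℝ))]
    _ ≤ 1/2 := by
        rw [← Finset.mul_sum, telescope_sum]
        have : (0:ℝ) ≤ 1/((r:ℝ)+1) := by positivity
        linarith

theorem coprime_pairs_at_least_half (r : ℕ) (hr : 1 ≤ r) :
    ((r : ℝ) ^ 2) / 2 ≤
      ((((Finset.Icc 1 r) ×ˢ (Finset.Icc 1 r)).filter
        (fun p => Nat.gcd p.1 p.2 = 1)).card : ℝ) := by
  classical
  set A := (Finset.Icc 1 r) ×ˢ (Finset.Icc 1 r) with hA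
  set C := A.filter (fun p => Nat.gcd p.1 p.2 = 1) with hC
  set N := A.filter (fun p => ¬ Nat.gcd p.1 p.2 = 1) with hN
  have hCN : C.card + N.card = r^2 := by
    rw [hC, hN, Finset.card_filter_add_card_filter_not, hA, Finset.card_product,
      Nat.card_Icc]
    simp [sq]
  have hsub : N ⊆ ((range (r+1)).filter Nat.Prime).biUnion
      (fun p => ((Finset.Icc 1 r).filter (p ∣ ·)) ×ˢ ((Finset.Icc 1 r).filter (p ∣ ·))) := by
    intro q hq
    simp only [hN, hA, Finset.mem_filter, Finset.mem_product, Finset.mem_Icc] at hq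
    obtain ⟨⟨⟨h1a, h1b⟩, h2a, h2b⟩, hg⟩ := hq
    set g := Nat.gcd q.1 q.2 with hgdef
    have hg0 : g ≠ 0 := by
      intro h; exact absurd (Nat.eq_zero_of_gcd_eq_zero_left (hgdef ▸ h)) (by omega)
    have hg2 : 2 ≤ g := by omega
    have hp := Nat.minFac_prime (show g ≠ 1 from hg)
    have hd1 : g.minFac ∣ q.1 := (Nat.minFac_dvd g).trans (Nat.gcd_dvd_left _ _)
    have hd2 : g.minFac ∣ q.2 := (Nat.minFac_dvd g).trans (Nat.gcd_dvd_right _ _)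
    have hple : g.minFac ≤ r := le_trans (Nat.le_of_dvd (by omega) hd1) h1b
    simp only [Finset.mem_biUnion, Finset.mem_filter, Finset.mem_range, Finset.mem_product,
      Finset.mem_Icc]
    exact ⟨g.minFac, ⟨by omega, hp⟩, ⟨⟨h1a, h1b⟩, hd1⟩, ⟨h2a, h2b⟩, hd2⟩
  have hcard : ∀ p : ℕ, (((Finset.Icc 1 r).filter (p ∣ ·)) ×ˢ
      ((Finset.Icc 1 r).filter (p ∣ ·))).card = (r / p) * (r / p) := by
    intro p
    rw [Finset.card_product]
    have : (Finset.Icc 1 r) = Finset.Ioc 0 r := by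
      rw [← Finset.Icc_add_one_left_eq_Ioc, zero_add]
    rw [this, Nat.Ioc_filter_dvd_card_eq_div]
  have hNle : (N.card : ℝ) ≤ (r:ℝ)^2 / 2 := by
    have h1 : N.card ≤ ∑ p ∈ (range (r+1)).filter Nat.Prime, (r / p) * (r / p) := by
      calc N.card ≤ _ := Finset.card_le_card hsub
        _ ≤ ∑ p ∈ (range (r+1)).filter Nat.Prime,
            (((Finset.Icc 1 r).filter (p ∣ ·)) ×ˢ ((Finset.Icc 1 r).filter (p ∣ ·))).card :=
          Finset.card_biUnion_le
        _ = _ := Finset.sum_congr rfl (fun p _ => hcard p)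
    calc (N.card : ℝ) ≤ ∑ p ∈ (range (r+1)).filter Nat.Prime, ((r / p : ℕ) : ℝ) * ((r / p : ℕ) : ℝ) := by
          exact_mod_cast h1
      _ ≤ ∑ p ∈ (range (r+1)).filter Nat.Prime, (r:ℝ)^2 * (1/(p:ℝ)^2) := by
          apply Finset.sum_le_sum
          intro p hp
          simp only [Finset.mem_filter, Finset.mem_range] at hp
          have hp0 : (0:ℝ) < (p:ℝ) := by exact_mod_cast hp.2.pos
          have hle : ((r / p : ℕ) : ℝ) ≤ (r:ℝ) / (p:ℝ) := Nat.cast_div_le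
          have h0 : (0:ℝ) ≤ ((r / p : ℕ) : ℝ) := by positivity
          calc ((r / p : ℕ) : ℝ) * ((r / p : ℕ) : ℝ) ≤ ((r:ℝ)/(p:ℝ)) * ((r:ℝ)/(p:ℝ)) := by
                apply mul_le_mul hle hle h0 (by positivity)
            _ = (r:ℝ)^2 * (1/(p:ℝ)^2) := by field_simp
      _ = (r:ℝ)^2 * ∑ p ∈ (range (r+1)).filter Nat.Prime, (1/(p:ℝ)^2) := by
          rw [Finset.mul_sum]
      _ ≤ (r:ℝ)^2 * (1/2) := by
          apply mul_le_mul_of_nonneg_left (primes_sum_le r) (by positivity)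
      _ = (r:ℝ)^2 / 2 := by ring
  have hCNr : (C.card : ℝ) + (N.card : ℝ) = (r:ℝ)^2 := by exact_mod_cast hCN
  linarith
end
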